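/- Let G be a finite group, A ≤ G a subgroup, and B ≤ C ≤ G subgroups with C contained in the normalizer N_G(B). Then the set ACB = AC is a union of (A,B)-double cosets, and the number of distinct (A,B)-double cosets contained in AC equals [C : A ∩ C] / [B : A ∩ B]; equivalently, it equals |C/B| · |A ∩ B| / |A ∩ C|. -/

import Mathlib

open scoped Pointwise

/-!
Since `C` normalizes `B`, `(A c B)⁻¹ = c⁻¹ • (B A)`, so up to inversion the double cosets `A c B`
with `c ∈ C` form the orbit of `B A` under left multiplication by `C`. Its stabilizer is
`C ∩ B A = B (A ∩ C)`, a subgroup because `A ∩ C` normalizes `B`, so by orbit–stabilizer there are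
`[C : B (A ∩ C)]` double cosets. The second isomorphism theorem gives
`[B (A ∩ C) : B] = [A ∩ C : A ∩ B]`, and both formulas follow from multiplicativity of the index.
-/

namespace Subgroup

variable {G : Type*} [Group G]

theorem card_mul_relIndex {H K : Subgroup G} (h : H ≤ K) :
    Nat.card H * H.relIndex K = Nat.card K := by
  rw [← relIndex_bot_left, ← relIndex_bot_left, relIndex_mul_relIndex _ _ _ bot_le h]

theorem relIndex_sup_left_of_le_normalizer {H N : Subgroup G}
    (hLE : H ≤ normalizer (N : Set G)) : N.relIndex (N ⊔ H) = N.relIndex H := by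
  have := normal_subgroupOf_of_le_normalizer hLE
  have := normal_subgroupOf_sup_of_le_normalizer hLE
  rw [sup_comm]
  exact Nat.card_congr (QuotientGroup.quotientInfEquivProdNormalizerQuotient H N hLE).toEquiv.symm

theorem mul_singleton_mul_subset {A B C : Subgroup G} (hBC : B ≤ C) {w : G}
    (hw : w ∈ (A : Set G) * C) : (A : Set G) * {w} * B ⊆ A * C :=
  calc (A : Set G) * {w} * B ⊆ A * (A * C) * C :=
        Set.mul_subset_mul (Set.mul_subset_mul_left (Set.singleton_subset_iff.mpr hw)) hBC
    _ = A * C := by rw [← mul_assoc, coe_mul_coe, mul_assoc, coe_mul_coe]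

theorem inv_mul_singleton_mul {A B : Subgroup G} {c : G} (hc : c ∈ normalizer (B : Set G)) :
    ((A : Set G) * {c} * B)⁻¹ = c⁻¹ • ((B : Set G) * A) := by
  rw [mul_inv_rev, mul_inv_rev, inv_coe_set, inv_coe_set, Set.inv_singleton, ← mul_assoc,
    ← set_mul_normalizer_comm _ B (Set.singleton_subset_iff.mpr (inv_mem hc)), mul_assoc,
    Set.singleton_mul]
  rfl

theorem smul_mul_eq_self_iff {A B : Subgroup G} {g : G} (hg : g ∈ normalizer (B : Set G)) :
    g • ((B : Set G) * A) = B * A ↔ g ∈ (B : Set G) * A := by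
  constructor
  · intro h
    rw [← h]
    exact ⟨1, ⟨1, B.one_mem, 1, A.one_mem, mul_one 1⟩, mul_one g⟩
  · rintro ⟨b, hb, a, ha, rfl⟩
    rw [← Set.singleton_smul]
    change ({b * a} : Set G) * ((B : Set G) * A) = B * A
    rw [← mul_assoc, set_mul_normalizer_comm _ B (Set.singleton_subset_iff.mpr hg),
      ← Set.singleton_mul_singleton, ← mul_assoc, subgroup_mul_singleton hb, mul_assoc,
      singleton_mul_subgroup ha]

variable {A B C : Subgroup G}

theorem stabilizer_mul_eq_subgroupOf (hBC : B ≤ C) (hnorm : C ≤ normalizer (B : Set G)) :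
    MulAction.stabilizer C ((B : Set G) * A) = (B ⊔ A ⊓ C).subgroupOf C := by
  ext c
  rw [MulAction.mem_stabilizer_iff, mem_subgroupOf, ← SetLike.mem_coe,
    coe_mul_of_right_le_normalizer_left B (A ⊓ C) (inf_le_right.trans hnorm),
    mul_inf_assoc B A C hBC, Set.mem_inter_iff, ← smul_mul_eq_self_iff (hnorm c.2)]
  exact (and_iff_left c.2).symm

theorem inv_setOf_mul_singleton_mul (hnorm : C ≤ normalizer (B : Set G)) :
    {s : Set G | ∃ c ∈ C, s = (A : Set G) * {c} * (B : Set G)}⁻¹ =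
      MulAction.orbit C ((B : Set G) * A) := by
  ext t
  simp only [Set.mem_inv, Set.mem_ofPred_eq, MulAction.mem_orbit_iff]
  constructor
  · rintro ⟨c, hc, h⟩
    refine ⟨⟨c, hc⟩⁻¹, ?_⟩
    rw [← inv_inv t, h, inv_mul_singleton_mul (hnorm hc)]
    rfl
  · rintro ⟨c, rfl⟩
    refine ⟨(c : G)⁻¹, inv_mem c.2, inv_eq_iff_eq_inv.mpr ?_⟩
    rw [inv_mul_singleton_mul (hnorm (inv_mem c.2)), inv_inv]
    rfl

theorem card_setOf_mul_singleton_mul (hBC : B ≤ C) (hnorm : C ≤ normalizer (B : Set G)) :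
    Nat.card {s : Set G | ∃ c ∈ C, s = (A : Set G) * {c} * (B : Set G)} =
      (B ⊔ A ⊓ C).relIndex C := by
  rw [← Set.natCard_inv, inv_setOf_mul_singleton_mul hnorm, Nat.card_coe_set_eq,
    ← MulAction.index_stabilizer, stabilizer_mul_eq_subgroupOf hBC hnorm]
  rfl

theorem relIndex_eq_relIndex_inf_mul_relIndex_sup (hBC : B ≤ C)
    (hnorm : C ≤ normalizer (B : Set G)) :
    B.relIndex C = (A ⊓ B).relIndex (A ⊓ C) * (B ⊔ A ⊓ C).relIndex C := by
  rw [← relIndex_mul_relIndex B _ C le_sup_left (sup_le hBC inf_le_right),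
    relIndex_sup_left_of_le_normalizer (inf_le_right.trans hnorm), ← inf_relIndex_right B,
    inf_left_comm B A C, inf_of_le_left hBC]

theorem relIndex_eq_relIndex_mul_relIndex_sup (hBC : B ≤ C) (hnorm : C ≤ normalizer (B : Set G))
    (hfin : (A ⊓ B).relIndex (A ⊓ C) ≠ 0) :
    A.relIndex C = A.relIndex B * (B ⊔ A ⊓ C).relIndex C := by
  have hAC := relIndex_mul_relIndex _ _ C (inf_le_inf_left A hBC) (inf_le_right (a := A))
  have hAB := relIndex_mul_relIndex _ _ C (inf_le_right (a := A)) hBC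
  rw [← hAB, inf_relIndex_right, inf_relIndex_right,
    relIndex_eq_relIndex_inf_mul_relIndex_sup hBC hnorm, mul_left_comm] at hAC
  exact Nat.eq_of_mul_eq_mul_left (Nat.pos_of_ne_zero hfin) hAC

end Subgroup

theorem card_double_cosets_in_AC
    {G : Type*} [Group G] [Finite G] (A B C : Subgroup G)
    (hBC : B ≤ C) (hnorm : C ≤ Subgroup.normalizer (B : Set G)) :
    (∀ w ∈ (A : Set G) * (C : Set G),
        (A : Set G) * {w} * (B : Set G) ⊆ (A : Set G) * (C : Set G)) ∧
      Nat.card {s : Set G | ∃ c ∈ C, s = (A : Set G) * {c} * (B : Set G)} =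
        A.relIndex C / A.relIndex B ∧
      Nat.card {s : Set G | ∃ c ∈ C, s = (A : Set G) * {c} * (B : Set G)} =
        B.relIndex C * Nat.card ↥(A ⊓ B) / Nat.card ↥(A ⊓ C) := by
  refine ⟨fun w hw ↦ Subgroup.mul_singleton_mul_subset hBC hw, ?_⟩
  rw [Subgroup.card_setOf_mul_singleton_mul hBC hnorm]
  have hfin (H K : Subgroup G) : H.relIndex K ≠ 0 := (H.subgroupOf K).index_ne_zero_of_finite
  have hA : A.relIndex C = A.relIndex B * (B ⊔ A ⊓ C).relIndex C :=
    Subgroup.relIndex_eq_relIndex_mul_relIndex_sup hBC hnorm (hfin _ _)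
  have hB : B.relIndex C * Nat.card ↥(A ⊓ B) = (B ⊔ A ⊓ C).relIndex C * Nat.card ↥(A ⊓ C) := by
    rw [Subgroup.relIndex_eq_relIndex_inf_mul_relIndex_sup (A := A) hBC hnorm,
      ← Subgroup.card_mul_relIndex (inf_le_inf_left A hBC)]
    ring
  rw [hA, hB, Nat.mul_div_cancel_left _ (hfin A B).bot_lt,
    Nat.mul_div_cancel _ Nat.card_pos]
  exact ⟨rfl, rfl⟩
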